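/- Let p ≥ 1 be an integer and θ > 0, let (x, λ, y) be a global solution of the closed-loop control system on [0, ∞) with λ nondecreasing, assume A⁻¹(0) = {z : 0 ∈ A z} is nonempty, and assume the error bound condition holds with constants δ > 0 and κ > 0. Set c = 2·(1 + κ/λ(0))^{−2}. Then there exists t₀ ≥ 0 such that for all t ≥ t₀: dist(x(t), A⁻¹(0)) ≤ dist(x(t₀), A⁻¹(0)) · e^{−c(t − t₀)/2}; in particular x(t) converges to A⁻¹(0) at a local linear rate. -/

import Mathlib

open scoped Pointwise
open RealInnerProductSpace Filter Topology Set Metric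

/-- A solution of the closed-loop control system on the time set `T`:
`x` is continuously differentiable with `x'(t) = y(t) - x(t)`,
`y(t)` is the resolvent point `(I + λ(t)A)⁻¹ x(t)` (i.e. `x(t) - y(t) ∈ λ(t) • A (y t)`),
`λ` is continuous and positive, and the algebraic equation
`λ(t) ‖y(t) - x(t)‖^{p-1} = θ` holds. -/
def IsCLSolution {H : Type*} [NormedAddCommGroup H] [InnerProductSpace ℝ H]
    (A : H → Set H) (p : ℕ) (θ : ℝ) (T : Set ℝ)
    (x : ℝ → H) (lam : ℝ → ℝ) (y : ℝ → H) : Prop :=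
  (∀ t ∈ T, 0 < lam t) ∧ ContinuousOn lam T ∧
  (∀ t ∈ T, x t - y t ∈ lam t • A (y t)) ∧
  (∀ t ∈ T, HasDerivWithinAt x (y t - x t) T t) ∧
  ContinuousOn (fun t => y t - x t) T ∧
  (∀ t ∈ T, lam t * ‖y t - x t‖ ^ (p - 1) = θ)

/-!
Let `S = A⁻¹(0)` and `v = y - x`. Since `(x - y)/λ ∈ A y`, monotonicity against `0 ∈ A z`,
`z ∈ S`, gives `⟪x - y, y - z⟫ ≥ 0`; hence `d/dt ‖x - z‖² ≤ -2‖v‖²` and `‖v‖ ≤ dist(x, S)`.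
The first inequality forces `v` to become small. Once `‖v‖ᵖ ≤ δθ`, the element `(x - y)/λ` has
norm `‖v‖ᵖ/θ ≤ δ`, and the error bound at `y` gives `dist(x, S) ≤ C ‖v‖` with `C = 1 + κ/λ(0)`;
as `dist(x, S)` is nonincreasing, this holds from some time `t₀` on. With `c = 2/C²`, integrating
the first inequality from `s` to `t` against each `z ∈ S` shows that `f = dist(x, S)²` satisfies
`f(t) (1 + c (t - s)) ≤ f(s)` for `t₀ ≤ s ≤ t`; iterating this implicit Euler step over `n` equal
subintervals and letting `n → ∞` gives `f(t) ≤ f(t₀) e^{-c (t - t₀)}`.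
-/

theorem le_mul_exp_of_mul_one_add_le {f : ℝ → ℝ} {a c : ℝ} (hc : 0 ≤ c)
    (h : ∀ s t, a ≤ s → s ≤ t → f t * (1 + c * (t - s)) ≤ f s) {t : ℝ} (ht : a ≤ t) :
    f t ≤ f a * Real.exp (-c * (t - a)) := by
  have hiter : ∀ τ, 0 ≤ τ → ∀ k : ℕ, f (a + k * τ) * (1 + c * τ) ^ k ≤ f a := by
    intro τ hτ k
    induction k with
    | zero => simp
    | succ k ih =>
      have hstep := h (a + k * τ) (a + (k + 1 : ℕ) * τ) (le_add_of_nonneg_right (by positivity))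
        (by push_cast; linarith)
      calc f (a + (k + 1 : ℕ) * τ) * (1 + c * τ) ^ (k + 1)
          = f (a + (k + 1 : ℕ) * τ) * (1 + c * (a + (k + 1 : ℕ) * τ - (a + k * τ)))
              * (1 + c * τ) ^ k := by push_cast; ring
        _ ≤ f (a + k * τ) * (1 + c * τ) ^ k := by gcongr
        _ ≤ f a := ih
  have hn : ∀ᶠ n : ℕ in atTop, f t * (1 + c * (t - a) / n) ^ n ≤ f a := by
    filter_upwards [eventually_ne_atTop 0] with n hn
    have := hiter ((t - a) / n) (div_nonneg (sub_nonneg.2 ht) n.cast_nonneg) n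
    rwa [mul_div_cancel₀ _ (Nat.cast_ne_zero.2 hn), add_sub_cancel, ← mul_div_assoc] at this
  have hlim : f t * Real.exp (c * (t - a)) ≤ f a :=
    le_of_tendsto ((Real.tendsto_one_add_div_pow_exp _).const_mul (f t)) hn
  calc f t = f t * Real.exp (c * (t - a)) * Real.exp (-c * (t - a)) := by
        rw [mul_assoc, ← Real.exp_add, neg_mul, add_neg_cancel, Real.exp_zero, mul_one]
    _ ≤ f a * Real.exp (-c * (t - a)) := by gcongr

theorem Metric.le_infDist_sq {α : Type*} [PseudoMetricSpace α] {x : α} {S : Set α}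
    (hS : S.Nonempty) {r : ℝ} (h : ∀ z ∈ S, r ≤ dist x z ^ 2) : r ≤ infDist x S ^ 2 := by
  by_contra! hlt
  obtain ⟨z, hz, hdist⟩ := (infDist_lt_iff hS).1 ((Real.lt_sqrt infDist_nonneg).2 hlt)
  exact (h z hz).not_gt ((Real.lt_sqrt dist_nonneg).1 hdist)

section SetValuedOperator

variable {H : Type*} [NormedAddCommGroup H]

def HasErrorBound (A : H → Set H) (δ κ : ℝ) : Prop :=
  ∀ u : H, (A u).Nonempty → sInf ((fun ξ => ‖ξ‖) '' A u) ≤ δ →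
    infDist u {z : H | 0 ∈ A z} ≤ κ * sInf ((fun ξ => ‖ξ‖) '' A u)

theorem HasErrorBound.infDist_le {A : H → Set H} {δ κ : ℝ} (hEB : HasErrorBound A δ κ)
    (hκ : 0 ≤ κ) {y a : H} (ha : a ∈ A y) (haδ : ‖a‖ ≤ δ) :
    infDist y {z : H | 0 ∈ A z} ≤ κ * ‖a‖ := by
  have hinf : sInf ((fun ξ => ‖ξ‖) '' A y) ≤ ‖a‖ :=
    csInf_le ⟨0, by rintro _ ⟨ξ, -, rfl⟩; exact norm_nonneg ξ⟩ ⟨a, ha, rfl⟩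
  exact (hEB y ⟨a, ha⟩ (hinf.trans haδ)).trans (mul_le_mul_of_nonneg_left hinf hκ)

variable [InnerProductSpace ℝ H]

def IsMonotoneOperator (A : H → Set H) : Prop :=
  ∀ x y u v : H, u ∈ A x → v ∈ A y → 0 ≤ ⟪u - v, x - y⟫

theorem IsMonotoneOperator.inner_sub_nonneg {A : H → Set H} (hA : IsMonotoneOperator A)
    {x y z : H} {lam : ℝ} (hlam : 0 ≤ lam) (hxy : x - y ∈ lam • A y) (hz : 0 ∈ A z) :
    0 ≤ ⟪x - y, y - z⟫ := by
  obtain ⟨a, ha, hxa⟩ := hxy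
  rw [← show lam • a = x - y from hxa]
  simpa [real_inner_smul_left] using mul_nonneg hlam (hA y z a 0 ha hz)

theorem inner_sub_le_neg_norm_sq_of_inner_nonneg {x y z : H} (h : 0 ≤ ⟪x - y, y - z⟫) :
    ⟪x - z, y - x⟫ ≤ -‖y - x‖ ^ 2 := by
  have hsplit : ⟪x - z, y - x⟫ = -‖y - x‖ ^ 2 - ⟪x - y, y - z⟫ := by
    rw [← real_inner_self_eq_norm_sq]
    simp only [inner_sub_left, inner_sub_right, real_inner_comm]
    ring
  linarith

theorem norm_sub_le_norm_sub_of_inner_nonneg {x y z : H} (h : 0 ≤ ⟪x - y, y - z⟫) :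
    ‖y - x‖ ≤ ‖x - z‖ := by
  have hsq : ‖x - z‖ ^ 2 = ‖x - y‖ ^ 2 + 2 * ⟪x - y, y - z⟫ + ‖y - z‖ ^ 2 := by
    rw [← sub_add_sub_cancel x y z, norm_add_sq_real]
  rw [norm_sub_rev]
  exact le_of_sq_le_sq (by nlinarith [sq_nonneg ‖y - z‖]) (norm_nonneg _)

end SetValuedOperator

namespace IsCLSolution

variable {H : Type*} [NormedAddCommGroup H] [InnerProductSpace ℝ H] {A : H → Set H} {p : ℕ}
  {θ : ℝ} {x : ℝ → H} {lam : ℝ → ℝ} {y : ℝ → H}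

theorem inner_sub_nonneg (hsol : IsCLSolution A p θ (Ici 0) x lam y)
    (hA : IsMonotoneOperator A) {t : ℝ} (ht : 0 ≤ t) {z : H} (hz : 0 ∈ A z) :
    0 ≤ ⟪x t - y t, y t - z⟫ :=
  hA.inner_sub_nonneg (hsol.1 t ht).le (hsol.2.2.1 t ht) hz

theorem norm_sub_le_infDist (hsol : IsCLSolution A p θ (Ici 0) x lam y)
    (hA : IsMonotoneOperator A) (hS : {z : H | 0 ∈ A z}.Nonempty) {t : ℝ} (ht : 0 ≤ t) :
    ‖y t - x t‖ ≤ infDist (x t) {z : H | 0 ∈ A z} :=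
  (le_infDist hS).2 fun z hz => by
    rw [dist_eq_norm]
    exact norm_sub_le_norm_sub_of_inner_nonneg (hsol.inner_sub_nonneg hA ht hz)

theorem sq_norm_sub_le (hsol : IsCLSolution A p θ (Ici 0) x lam y) (hA : IsMonotoneOperator A)
    {z : H} (hz : 0 ∈ A z) {s t m : ℝ} (hs : 0 ≤ s) (hst : s ≤ t)
    (hm : ∀ σ ∈ Ico s t, m ≤ 2 * ‖y σ - x σ‖ ^ 2) :
    ‖x t - z‖ ^ 2 ≤ ‖x s - z‖ ^ 2 - m * (t - s) := by
  have hsub : Icc s t ⊆ Ici 0 := fun σ hσ => hs.trans hσ.1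
  have hcont : ContinuousOn x (Icc s t) :=
    fun σ hσ => ((hsol.2.2.2.1 σ (hsub hσ)).continuousWithinAt).mono hsub
  have hderiv : ∀ σ ∈ Ico s t, HasDerivWithinAt (fun τ => ‖x τ - z‖ ^ 2)
      (2 * ⟪x σ - z, y σ - x σ⟫) (Ici σ) σ := fun σ hσ => by
    have hσ : 0 ≤ σ := hs.trans hσ.1
    simpa using ((hsol.2.2.2.1 σ hσ).sub_const z).norm_sq.mono (Ici_subset_Ici.2 hσ)
  refine image_le_of_deriv_right_le_deriv_boundary ((hcont.sub continuousOn_const).norm.pow 2)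
    hderiv (B := fun σ => ‖x s - z‖ ^ 2 - m * (σ - s)) (B' := fun _ => -m) (by simp)
    (by fun_prop) (fun σ _ => ?_) (fun σ hσ => ?_) ⟨hst, le_rfl⟩
  · simpa using (((hasDerivAt_id σ).sub_const s).const_mul m).const_sub _ |>.hasDerivWithinAt
  · have := inner_sub_le_neg_norm_sq_of_inner_nonneg (hsol.inner_sub_nonneg hA (hs.trans hσ.1) hz)
    linarith [hm σ hσ]

theorem infDist_antitoneOn (hsol : IsCLSolution A p θ (Ici 0) x lam y)
    (hA : IsMonotoneOperator A) (hS : {z : H | 0 ∈ A z}.Nonempty) :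
    AntitoneOn (fun t => infDist (x t) {z : H | 0 ∈ A z}) (Ici 0) := by
  intro s hs t _ hst
  refine (le_infDist hS).2 fun z hz => (infDist_le_dist_of_mem hz).trans ?_
  rw [dist_eq_norm, dist_eq_norm,
    ← pow_le_pow_iff_left₀ (norm_nonneg _) (norm_nonneg _) two_ne_zero]
  simpa using hsol.sq_norm_sub_le hA hz hs hst (m := 0) fun σ _ => by positivity

theorem infDist_sq_mul_one_add_le (hsol : IsCLSolution A p θ (Ici 0) x lam y)
    (hA : IsMonotoneOperator A) (hS : {z : H | 0 ∈ A z}.Nonempty) {c t₀ : ℝ} (hc : 0 ≤ c)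
    (ht₀ : 0 ≤ t₀)
    (hdecay : ∀ σ, t₀ ≤ σ → c * infDist (x σ) {z : H | 0 ∈ A z} ^ 2 ≤ 2 * ‖y σ - x σ‖ ^ 2)
    {s t : ℝ} (hs : t₀ ≤ s) (hst : s ≤ t) :
    infDist (x t) {z : H | 0 ∈ A z} ^ 2 * (1 + c * (t - s))
      ≤ infDist (x s) {z : H | 0 ∈ A z} ^ 2 := by
  set S := {z : H | 0 ∈ A z}
  refine le_infDist_sq hS fun z hz => ?_
  have hm : ∀ σ ∈ Ico s t, c * infDist (x t) S ^ 2 ≤ 2 * ‖y σ - x σ‖ ^ 2 := fun σ hσ => by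
    have hσ₀ : t₀ ≤ σ := hs.trans hσ.1
    have := hsol.infDist_antitoneOn hA hS (ht₀.trans hσ₀) (ht₀.trans (hσ₀.trans hσ.2.le)) hσ.2.le
    calc c * infDist (x t) S ^ 2 ≤ c * infDist (x σ) S ^ 2 := by gcongr; exact infDist_nonneg
      _ ≤ 2 * ‖y σ - x σ‖ ^ 2 := hdecay σ hσ₀
  have hdist : infDist (x t) S ^ 2 ≤ ‖x t - z‖ ^ 2 := by
    rw [← dist_eq_norm]
    exact pow_le_pow_left₀ infDist_nonneg (infDist_le_dist_of_mem hz) 2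
  have := hsol.sq_norm_sub_le hA hz (ht₀.trans hs) hst hm
  rw [dist_eq_norm]
  linarith

theorem exists_norm_sub_lt (hsol : IsCLSolution A p θ (Ici 0) x lam y)
    (hA : IsMonotoneOperator A) {z : H} (hz : 0 ∈ A z) {ε : ℝ} (hε : 0 < ε) :
    ∃ t, 0 ≤ t ∧ ‖y t - x t‖ < ε := by
  by_contra! hbig
  set T := (‖x 0 - z‖ ^ 2 + 1) / (2 * ε ^ 2)
  have hT : 2 * ε ^ 2 * (T - 0) = ‖x 0 - z‖ ^ 2 + 1 := by
    rw [sub_zero, mul_div_cancel₀ _ (by positivity)]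
  have := hsol.sq_norm_sub_le hA hz le_rfl (by positivity : 0 ≤ T) (m := 2 * ε ^ 2)
    fun σ hσ => by gcongr; exact hbig σ hσ.1
  nlinarith [sq_nonneg ‖x T - z‖]

theorem infDist_le_mul_norm_sub (hsol : IsCLSolution A p θ (Ici 0) x lam y) (hp : 1 ≤ p)
    (hθ : 0 < θ) (hlam : MonotoneOn lam (Ici 0)) {δ κ : ℝ} (hκ : 0 ≤ κ)
    (hEB : HasErrorBound A δ κ) {t : ℝ} (ht : 0 ≤ t) (hv : ‖y t - x t‖ ^ p ≤ δ * θ) :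
    infDist (x t) {z : H | 0 ∈ A z} ≤ (1 + κ / lam 0) * ‖y t - x t‖ := by
  obtain ⟨hpos, -, hmem, -, -, halg⟩ := hsol
  obtain ⟨a, ha, hxa⟩ := hmem t ht
  have hlam0 : 0 < lam 0 := hpos 0 self_mem_Ici
  have hnorm : lam t * ‖a‖ = ‖y t - x t‖ := by
    rw [norm_sub_rev, ← show lam t • a = x t - y t from hxa, norm_smul,
      Real.norm_of_nonneg (hpos t ht).le]
  have haθ : ‖a‖ * θ = ‖y t - x t‖ ^ p :=
    calc ‖a‖ * θ = lam t * ‖a‖ * ‖y t - x t‖ ^ (p - 1) := by rw [← halg t ht]; ring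
      _ = ‖y t - x t‖ ^ p := by rw [hnorm, ← pow_succ', Nat.sub_add_cancel hp]
  have haδ : ‖a‖ ≤ δ := le_of_mul_le_mul_right (haθ ▸ hv) hθ
  have hlam_le : lam 0 * ‖a‖ ≤ ‖y t - x t‖ :=
    hnorm ▸ mul_le_mul_of_nonneg_right (hlam self_mem_Ici ht ht) (norm_nonneg a)
  calc infDist (x t) {z : H | 0 ∈ A z}
      ≤ infDist (y t) {z : H | 0 ∈ A z} + dist (x t) (y t) := infDist_le_infDist_add_dist
    _ ≤ κ * ‖a‖ + ‖y t - x t‖ := by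
        rw [dist_eq_norm, norm_sub_rev]
        gcongr
        exact hEB.infDist_le hκ ha haδ
    _ ≤ κ / lam 0 * ‖y t - x t‖ + ‖y t - x t‖ := by
        gcongr ?_ + _
        rw [div_mul_eq_mul_div, le_div_iff₀ hlam0]
        nlinarith
    _ = (1 + κ / lam 0) * ‖y t - x t‖ := by ring

theorem exists_forall_ge_infDist_le_mul_norm_sub (hsol : IsCLSolution A p θ (Ici 0) x lam y)
    (hA : IsMonotoneOperator A) (hS : {z : H | 0 ∈ A z}.Nonempty) (hp : 1 ≤ p) (hθ : 0 < θ)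
    (hlam : MonotoneOn lam (Ici 0)) {δ κ : ℝ} (hδ : 0 < δ) (hκ : 0 ≤ κ)
    (hEB : HasErrorBound A δ κ) :
    ∃ t₀, 0 ≤ t₀ ∧ ∀ t, t₀ ≤ t →
      infDist (x t) {z : H | 0 ∈ A z} ≤ (1 + κ / lam 0) * ‖y t - x t‖ := by
  set C := 1 + κ / lam 0
  have hC : 1 ≤ C := le_add_of_nonneg_right (div_nonneg hκ (hsol.1 0 self_mem_Ici).le)
  set r := min 1 (δ * θ)
  have hr : 0 < r := lt_min one_pos (mul_pos hδ hθ)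
  have hEBr : ∀ t, 0 ≤ t → ‖y t - x t‖ ≤ r →
      infDist (x t) {z : H | 0 ∈ A z} ≤ C * ‖y t - x t‖ :=
    fun t ht hv => hsol.infDist_le_mul_norm_sub hp hθ hlam hκ hEB ht <|
      calc ‖y t - x t‖ ^ p ≤ r ^ p := by gcongr
        _ ≤ r := pow_le_of_le_one hr.le (min_le_left _ _) (by omega)
        _ ≤ δ * θ := min_le_right _ _
  obtain ⟨z₀, hz₀⟩ := hS
  obtain ⟨t₀, ht₀, hv₀⟩ :=
    hsol.exists_norm_sub_lt hA hz₀ (div_pos hr (by linarith) : 0 < r / C)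
  have hd₀ : infDist (x t₀) {z : H | 0 ∈ A z} ≤ r :=
    calc infDist (x t₀) {z : H | 0 ∈ A z}
        ≤ C * ‖y t₀ - x t₀‖ := hEBr t₀ ht₀ (hv₀.le.trans (div_le_self hr.le hC))
      _ ≤ C * (r / C) := by gcongr
      _ = r := mul_div_cancel₀ _ (by linarith)
  refine ⟨t₀, ht₀, fun t ht => hEBr t (ht₀.trans ht) ?_⟩
  exact (hsol.norm_sub_le_infDist hA ⟨z₀, hz₀⟩ (ht₀.trans ht)).trans
    ((hsol.infDist_antitoneOn hA ⟨z₀, hz₀⟩ ht₀ (ht₀.trans ht) ht).trans hd₀)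

end IsCLSolution

theorem stmt_14_general {H : Type*} [NormedAddCommGroup H] [InnerProductSpace ℝ H]
    (A : H → Set H)
    (hmono : ∀ x y u v : H, u ∈ A x → v ∈ A y → 0 ≤ ⟪u - v, x - y⟫)
    (p : ℕ) (hp : 1 ≤ p) (θ : ℝ) (hθ : 0 < θ)
    (x : ℝ → H) (lam : ℝ → ℝ) (y : ℝ → H)
    (hsol : IsCLSolution A p θ (Ici 0) x lam y)
    (hlam : MonotoneOn lam (Ici 0))
    (hne : ∃ z : H, 0 ∈ A z)
    (δ κ : ℝ) (hδ : 0 < δ) (hκ : 0 < κ)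
    (hEB : ∀ u : H, (A u).Nonempty → sInf ((fun ξ => ‖ξ‖) '' A u) ≤ δ →
      Metric.infDist u {z : H | 0 ∈ A z} ≤ κ * sInf ((fun ξ => ‖ξ‖) '' A u)) :
    ∃ t₀ : ℝ, 0 ≤ t₀ ∧ ∀ t : ℝ, t₀ ≤ t →
      Metric.infDist (x t) {z : H | 0 ∈ A z}
        ≤ Metric.infDist (x t₀) {z : H | 0 ∈ A z} *
            Real.exp (-(2 * (1 + κ / lam 0)⁻¹ ^ 2) * (t - t₀) / 2) := by
  set S := {z : H | 0 ∈ A z}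
  have hS : S.Nonempty := hne
  set C := 1 + κ / lam 0
  set c := 2 * C⁻¹ ^ 2
  have hc : 0 ≤ c := by positivity
  have hcC : c * C ^ 2 = 2 := by
    have hC : C ≠ 0 := by
      have := hsol.1 0 self_mem_Ici
      positivity
    simp only [c]
    field_simp
  obtain ⟨t₀, ht₀, hEB₀⟩ :=
    hsol.exists_forall_ge_infDist_le_mul_norm_sub hmono hS hp hθ hlam hδ hκ.le hEB
  have hdecay : ∀ σ, t₀ ≤ σ → c * infDist (x σ) S ^ 2 ≤ 2 * ‖y σ - x σ‖ ^ 2 := fun σ hσ =>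
    calc c * infDist (x σ) S ^ 2 ≤ c * (C * ‖y σ - x σ‖) ^ 2 := by
          gcongr
          exacts [infDist_nonneg, hEB₀ σ hσ]
      _ = 2 * ‖y σ - x σ‖ ^ 2 := by rw [mul_pow, ← mul_assoc, hcC]
  refine ⟨t₀, ht₀, fun t ht => ?_⟩
  have hsq := le_mul_exp_of_mul_one_add_le (f := fun t => infDist (x t) S ^ 2) hc
    (fun s t hs hst => hsol.infDist_sq_mul_one_add_le hmono hS hc ht₀ hdecay hs hst) ht
  have hexp : ((2 : ℕ) : ℝ) * (-c * (t - t₀) / 2) = -c * (t - t₀) := by push_cast; ring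
  rwa [← pow_le_pow_iff_left₀ infDist_nonneg (mul_nonneg infDist_nonneg (Real.exp_pos _).le)
    two_ne_zero, mul_pow, ← Real.exp_nat_mul, hexp]

/-- Local linear convergence under the error bound condition: with
`c = 2 (1 + κ/λ(0))⁻²`, there exists `t₀ ≥ 0` such that
`dist(x(t), A⁻¹(0)) ≤ dist(x(t₀), A⁻¹(0)) e^{-c(t - t₀)/2}` for all `t ≥ t₀`. -/
theorem stmt_14 {H : Type*} [NormedAddCommGroup H] [InnerProductSpace ℝ H] [CompleteSpace H]
    (A : H → Set H)
    (hmono : ∀ x y u v : H, u ∈ A x → v ∈ A y → 0 ≤ ⟪u - v, x - y⟫)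
    (p : ℕ) (hp : 1 ≤ p) (θ : ℝ) (hθ : 0 < θ)
    (x : ℝ → H) (lam : ℝ → ℝ) (y : ℝ → H)
    (hsol : IsCLSolution A p θ (Ici 0) x lam y)
    (hlam : MonotoneOn lam (Ici 0))
    (hne : ∃ z : H, 0 ∈ A z)
    (δ κ : ℝ) (hδ : 0 < δ) (hκ : 0 < κ)
    (hEB : ∀ u : H, (A u).Nonempty → sInf ((fun ξ => ‖ξ‖) '' A u) ≤ δ →
      Metric.infDist u {z : H | 0 ∈ A z} ≤ κ * sInf ((fun ξ => ‖ξ‖) '' A u)) :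
    ∃ t₀ : ℝ, 0 ≤ t₀ ∧ ∀ t : ℝ, t₀ ≤ t →
      Metric.infDist (x t) {z : H | 0 ∈ A z}
        ≤ Metric.infDist (x t₀) {z : H | 0 ∈ A z} *
            Real.exp (-(2 * (1 + κ / lam 0)⁻¹ ^ 2) * (t - t₀) / 2) :=
  stmt_14_general A hmono p hp θ hθ x lam y hsol hlam hne δ κ hδ hκ hEB
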